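/- Let X ⊂ P^m be a nondegenerate subvariety of dimension n, and Γ ⊂ P^N × X × P^m the subscheme defined by ℓ(v) ∧ w = 0 (the closed graph of the universal linear map). Then for α ∈ P^N the fibre Γ_α equals Γ(α) ∪ (C_α × P^m), where Γ(α) is the closed graph of α|_X and C_α is the trace on X of the center of α; moreover Γ_α = Γ(α) if and only if C_α = ∅. -/

import Mathlib

noncomputable section

open MvPolynomial

/-- Complex projective space with homogeneous coordinates indexed by `ι`. -/
abbrev PS (ι : Type) : Type := Projectivization ℂ (ι → ℂ)

/-- Zariski closed subsets of projective space: common zero loci of sets of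
homogeneous polynomials.  (Membership is tested on the chosen representative
`x.rep`; this is independent of the representative since the polynomials are
homogeneous.) -/
def IsZarClosed {ι : Type} [Fintype ι] (s : Set (PS ι)) : Prop :=
  ∃ T : Set (MvPolynomial ι ℂ),
    (∀ p ∈ T, ∃ d, p.IsHomogeneous d) ∧
    s = {x : PS ι | ∀ p ∈ T, eval x.rep p = 0}

/-- The Zariski topology on projective space. -/
instance zariskiTopology (ι : Type) [Fintype ι] : TopologicalSpace (PS ι) :=
  TopologicalSpace.ofClosed {s | IsZarClosed s}
    (by
      refine ⟨{1}, ?_, ?_⟩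
      · intro p hp
        rw [Set.mem_singleton_iff] at hp
        exact ⟨0, hp ▸ isHomogeneous_one ι ℂ⟩
      · ext x
        simp)
    (by
      intro A hA
      refine ⟨⋃ (s : A), (hA s.2).choose, ?_, ?_⟩
      · intro p hp
        simp only [Set.mem_iUnion] at hp
        obtain ⟨s, hs⟩ := hp
        exact (hA s.2).choose_spec.1 p hs
      · ext x
        simp only [Set.mem_sInter, Set.mem_setOf_eq, Set.mem_iUnion]
        constructor
        · rintro hx p ⟨s, hp⟩
          have h2 := (hA s.2).choose_spec.2
          have hxs := hx s.1 s.2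
          rw [h2] at hxs
          exact hxs p hp
        · intro hx s hs
          rw [(hA hs).choose_spec.2]
          intro p hp
          exact hx p ⟨⟨s, hs⟩, hp⟩)
    (by
      intro a ha b hb
      refine ⟨Set.image2 (· * ·) ha.choose hb.choose, ?_, ?_⟩
      · rintro r ⟨p, hp, q, hq, rfl⟩
        obtain ⟨d1, h1⟩ := ha.choose_spec.1 p hp
        obtain ⟨d2, h2⟩ := hb.choose_spec.1 q hq
        exact ⟨d1 + d2, h1.mul h2⟩
      · ext x
        constructor
        · rintro (hx | hx) r ⟨p, hp, q, hq, rfl⟩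
          · rw [ha.choose_spec.2] at hx
            simp [map_mul, hx p hp]
          · rw [hb.choose_spec.2] at hx
            simp [map_mul, hx q hq]
        · intro hx
          by_cases hxa : x ∈ a
          · exact Or.inl hxa
          · refine Or.inr ?_
            rw [hb.choose_spec.2]
            intro q hq
            rw [ha.choose_spec.2] at hxa
            simp only [Set.mem_setOf_eq, not_forall] at hxa
            obtain ⟨p, hp, hpe⟩ := hxa
            have := hx (p * q) ⟨p, hp, q, hq, rfl⟩
            rw [map_mul] at this
            exact (mul_eq_zero.1 this).resolve_left hpe)

/-- `ℙ^m` with its `m+1` homogeneous coordinates. -/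
abbrev Pm (m : ℕ) := PS (Fin (m + 1))

/-- `ℙ^N = ℙ(End(V))`, `N = (m+1)² - 1`: the space of linear rational maps
`ℙ^m ⇢ ℙ^m`, i.e. the projectivization of the space of `(m+1) × (m+1)` matrices. -/
abbrev PN (m : ℕ) := PS (Fin (m + 1) × Fin (m + 1))

/-- The endomorphism `ℓ` represented by `α ∈ ℙ(End V)` applied to a vector `v`. -/
def act (m : ℕ) (α : PN m) (v : Fin (m + 1) → ℂ) : Fin (m + 1) → ℂ :=
  fun i => ∑ j, α.rep (i, j) * v j

/-- The trace `C_α` on `X` of the center of the linear projection `α`: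
the points `[v] ∈ X` with `ℓ(v) = 0`. -/
def center (m : ℕ) (X : Set (Pm m)) (α : PN m) : Set (Pm m) :=
  {x ∈ X | act m α x.rep = 0}

/-- `maps m α x y` : the linear rational map `α` is defined at `x` and sends `x` to `y`. -/
def maps (m : ℕ) (α : PN m) (x y : Pm m) : Prop :=
  ∃ h : act m α x.rep ≠ 0, y = Projectivization.mk ℂ (act m α x.rep) h

/-- The (set-theoretic) image `α(X ∖ C_α)`. -/
def imageSet (m : ℕ) (X : Set (Pm m)) (α : PN m) : Set (Pm m) :=
  {y | ∃ x ∈ X, maps m α x y}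

/-- The fibre of `α : X ⇢ ℙ^m` over `y`. -/
def fibre (m : ℕ) (X : Set (Pm m)) (α : PN m) (y : Pm m) : Set (Pm m) :=
  {x ∈ X | maps m α x y}

/-- `α : X ⇢ closure (α(X))` is (dominant onto its closed image and) of finite
degree: over a nonempty Zariski-open subset of the image, all fibres are finite. -/
def HasFiniteDegree (m : ℕ) (X : Set (Pm m)) (α : PN m) : Prop :=
  ∃ U : Set (Pm m), IsOpen U ∧ (U ∩ imageSet m X α).Nonempty ∧
    ∀ y ∈ U ∩ imageSet m X α, (fibre m X α y).Finite

/-- `α : X ⇢ closure (α(X))` is dominant of degree exactly `k` : the general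
fibre consists of `k` points. -/
def HasDegree (m : ℕ) (X : Set (Pm m)) (α : PN m) (k : ℕ) : Prop :=
  ∃ U : Set (Pm m), IsOpen U ∧ (U ∩ imageSet m X α).Nonempty ∧
    ∀ y ∈ U ∩ imageSet m X α, (fibre m X α y).Finite ∧ (fibre m X α y).ncard = k

/-- `X ⊆ ℙ^m` is nondegenerate: contained in no hyperplane. -/
def Nondegenerate (m : ℕ) (X : Set (Pm m)) : Prop :=
  ∀ φ : (Fin (m + 1) → ℂ) →ₗ[ℂ] ℂ, (∀ x ∈ X, φ x.rep = 0) → φ = 0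

/-- Zariski closed subsets of a product `ℙ^m × ℙ^m'` : common zero loci of sets
of bihomogeneous polynomials in the two groups of homogeneous coordinates. -/
def IsZarClosed2 {ι κ : Type} [Fintype ι] [Fintype κ] (s : Set (PS ι × PS κ)) : Prop :=
  ∃ T : Set (MvPolynomial (ι ⊕ κ) ℂ),
    (∀ p ∈ T, ∃ d e : ℕ,
      p.IsWeightedHomogeneous (Sum.elim (fun _ => ((1 : ℕ), (0 : ℕ))) (fun _ => (0, 1))) (d, e)) ∧
    s = {q | ∀ p ∈ T, eval (Sum.elim q.1.rep q.2.rep) p = 0}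

/-- The Zariski closure of a subset of the product `ℙ^m × ℙ^m'`. -/
def zclosure2 {ι κ : Type} [Fintype ι] [Fintype κ] (s : Set (PS ι × PS κ)) :
    Set (PS ι × PS κ) :=
  ⋂₀ {C | IsZarClosed2 C ∧ s ⊆ C}

/-- The fibre `Γ_α` over `α` of the universal closed graph
`Γ ⊆ ℙ^N × X × ℙ^m`, defined by the equations `ℓ(v) ∧ w = 0`,
i.e. `ℓ(v)` proportional to `w`. -/
def graphFibre (m : ℕ) (X : Set (Pm m)) (α : PN m) : Set (Pm m × Pm m) :=
  {q | q.1 ∈ X ∧ act m α q.1.rep ∈ Submodule.span ℂ {q.2.rep}}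

/-- The (set-theoretic) graph of the linear rational map `α` restricted to `X`. -/
def graphSet (m : ℕ) (X : Set (Pm m)) (α : PN m) : Set (Pm m × Pm m) :=
  {q | q.1 ∈ X ∧ maps m α q.1 q.2}

/-! `Γ_α` is cut out of `X × ℙ^m` by the bihomogeneous `2 × 2` minors of the pair
`(ℓ(v), w)`, so it is Zariski closed, and pointwise it is the graph of `α` off `C_α` together
with `C_α × ℙ^m`; this gives the decomposition. If `x ∈ C_α`, then `ℓ` is singular, so a
nonzero linear form `z` kills the image of `ℓ`: the closed graph then lies in `X × {z = 0}`,
while `{x} × ℙ^m ⊆ Γ_α` does not. -/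

open Matrix

namespace MvPolynomial.IsWeightedHomogeneous

variable {R σ τ M N : Type*} [CommSemiring R] [AddCommMonoid M] [AddCommMonoid N]

theorem rename {w : τ → M} {p : MvPolynomial σ R} {d : M} (f : σ → τ)
    (h : p.IsWeightedHomogeneous (w ∘ f) d) :
    (MvPolynomial.rename f p).IsWeightedHomogeneous w d := by
  intro e he
  obtain ⟨u, rfl, hu⟩ := coeff_rename_ne_zero f p e he
  rw [← h hu, Finsupp.weight_apply, Finsupp.weight_apply,
    Finsupp.sum_mapDomain_index (fun _ => by simp) (fun b a c => add_smul a c (w b))]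
  rfl

theorem map_weight {w : σ → M} {p : MvPolynomial σ R} {d : M} (g : M →+ N)
    (h : p.IsWeightedHomogeneous w d) : p.IsWeightedHomogeneous (g ∘ w) (g d) := by
  intro e he
  rw [← h he, Finsupp.weight_apply, Finsupp.weight_apply, map_finsuppSum]
  simp only [Function.comp_apply, map_nsmul]

end MvPolynomial.IsWeightedHomogeneous

theorem Projectivization.mk_eq_iff_mem_span {K V : Type*} [DivisionRing K] [AddCommGroup V]
    [Module K V] {v : V} (hv : v ≠ 0) (y : Projectivization K V) :
    mk K v hv = y ↔ v ∈ K ∙ y.rep := by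
  conv_lhs => rw [← y.mk_rep]
  rw [mk_eq_mk_iff', Submodule.mem_span_singleton]

theorem mem_span_singleton_iff_mul_eq_mul {K ι : Type*} [Field K] {p q : ι → K} (hq : q ≠ 0) :
    p ∈ K ∙ q ↔ ∀ i j, p i * q j = p j * q i := by
  rw [Submodule.mem_span_singleton]
  refine ⟨?_, fun h => ?_⟩
  · rintro ⟨a, rfl⟩ i j
    simp only [Pi.smul_apply, smul_eq_mul]
    ring
  · obtain ⟨k, hk⟩ : ∃ k, q k ≠ 0 := Function.ne_iff.mp hq
    refine ⟨p k / q k, funext fun i => ?_⟩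
    simp only [Pi.smul_apply, smul_eq_mul]
    field_simp
    linear_combination -h i k

section Zariski

variable {ι κ : Type} [Fintype ι]

abbrev bidegree (ι κ : Type) : ι ⊕ κ → ℕ × ℕ := Sum.elim (fun _ => (1, 0)) (fun _ => (0, 1))

theorem IsClosed.isZarClosed {s : Set (PS ι)} (h : IsClosed s) : IsZarClosed s := by
  have h' : sᶜᶜ ∈ {t : Set (PS ι) | IsZarClosed t} := h.isOpen_compl
  simpa using h'

theorem isZarClosed_setOf_dotProduct_rep_eq_zero (z : ι → ℂ) :
    IsZarClosed {y : PS ι | z ⬝ᵥ y.rep = 0} := by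
  refine ⟨{∑ i, C (z i) * X i}, ?_, ?_⟩
  · rintro p rfl
    exact ⟨1, IsHomogeneous.sum _ _ _ fun i _ => (isHomogeneous_X ℂ i).C_mul (z i)⟩
  · ext y
    simp [dotProduct]

theorem exists_dotProduct_rep_ne_zero {z : ι → ℂ} (hz : z ≠ 0) : ∃ y : PS ι, z ⬝ᵥ y.rep ≠ 0 := by
  classical
  obtain ⟨i, hi⟩ : ∃ i, z i ≠ 0 := Function.ne_iff.mp hz
  have hv : (Pi.single i 1 : ι → ℂ) ≠ 0 := Pi.single_ne_zero_iff.mpr one_ne_zero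
  obtain ⟨a, ha⟩ := Projectivization.exists_smul_eq_mk_rep ℂ _ hv
  refine ⟨Projectivization.mk ℂ _ hv, ?_⟩
  rw [← ha, Units.smul_def, dotProduct_smul, dotProduct_single, mul_one, smul_eq_mul]
  exact mul_ne_zero a.ne_zero hi

def mulVecMinor (A : Matrix κ ι ℂ) (i j : κ) : MvPolynomial (ι ⊕ κ) ℂ :=
  X (Sum.inr j) * ∑ k, C (A i k) * X (Sum.inl k) - X (Sum.inr i) * ∑ k, C (A j k) * X (Sum.inl k)

theorem eval_mulVecMinor (A : Matrix κ ι ℂ) (i j : κ) (v : ι → ℂ) (w : κ → ℂ) :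
    eval (Sum.elim v w) (mulVecMinor A i j) = w j * (A *ᵥ v) i - w i * (A *ᵥ v) j := by
  simp [mulVecMinor, mulVec, dotProduct]

theorem isWeightedHomogeneous_mulVecMinor (A : Matrix κ ι ℂ) (i j : κ) :
    (mulVecMinor A i j).IsWeightedHomogeneous (bidegree ι κ) (1, 1) := by
  have hlin : ∀ i, (∑ k, C (A i k) * X (Sum.inl k) : MvPolynomial (ι ⊕ κ) ℂ).IsWeightedHomogeneous
      (bidegree ι κ) (1, 0) := fun i =>
    .sum _ _ _ fun k _ => (isWeightedHomogeneous_X ℂ _ (Sum.inl k)).C_mul (A i k)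
  exact ((isWeightedHomogeneous_X ℂ _ _).mul (hlin i)).sub
    ((isWeightedHomogeneous_X ℂ _ _).mul (hlin j))

variable [Fintype κ]

theorem IsZarClosed2.inter {s t : Set (PS ι × PS κ)} (hs : IsZarClosed2 s)
    (ht : IsZarClosed2 t) : IsZarClosed2 (s ∩ t) := by
  obtain ⟨S, hShom, rfl⟩ := hs
  obtain ⟨T, hThom, rfl⟩ := ht
  refine ⟨S ∪ T, fun p hp => hp.elim (hShom p) (hThom p), ?_⟩
  ext q
  simp only [Set.mem_inter_iff, Set.mem_ofPred_eq, Set.mem_union, or_imp, forall_and]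

theorem IsZarClosed.preimage_fst {s : Set (PS ι)} (hs : IsZarClosed s) :
    IsZarClosed2 (Prod.fst ⁻¹' s : Set (PS ι × PS κ)) := by
  obtain ⟨T, hThom, rfl⟩ := hs
  refine ⟨rename Sum.inl '' T, ?_, ?_⟩
  · rintro _ ⟨p, hp, rfl⟩
    obtain ⟨d, hd⟩ := hThom p hp
    exact ⟨d, 0, (hd.map_weight (AddMonoidHom.inl ℕ ℕ)).rename (w := bidegree ι κ) Sum.inl⟩
  · ext q
    simp [eval_rename, Sum.elim_comp_inl]

theorem IsZarClosed.preimage_snd {s : Set (PS κ)} (hs : IsZarClosed s) :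
    IsZarClosed2 (Prod.snd ⁻¹' s : Set (PS ι × PS κ)) := by
  obtain ⟨T, hThom, rfl⟩ := hs
  refine ⟨rename Sum.inr '' T, ?_, ?_⟩
  · rintro _ ⟨p, hp, rfl⟩
    obtain ⟨d, hd⟩ := hThom p hp
    exact ⟨0, d, (hd.map_weight (AddMonoidHom.inr ℕ ℕ)).rename (w := bidegree ι κ) Sum.inr⟩
  · ext q
    simp [eval_rename, Sum.elim_comp_inr]

theorem isZarClosed2_setOf_mulVec_mem_span (A : Matrix κ ι ℂ) :
    IsZarClosed2 {q : PS ι × PS κ | A *ᵥ q.1.rep ∈ ℂ ∙ q.2.rep} := by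
  refine ⟨Set.range fun ij : κ × κ => mulVecMinor A ij.1 ij.2, ?_, ?_⟩
  · rintro _ ⟨ij, rfl⟩
    exact ⟨1, 1, isWeightedHomogeneous_mulVecMinor A ij.1 ij.2⟩
  · ext q
    simp only [Set.mem_ofPred_eq, Set.forall_mem_range, Prod.forall, eval_mulVecMinor,
      sub_eq_zero, mem_span_singleton_iff_mul_eq_mul q.2.rep_nonzero, mul_comm]

theorem subset_zclosure2 (s : Set (PS ι × PS κ)) : s ⊆ zclosure2 s :=
  Set.subset_sInter fun _ hC => hC.2

theorem zclosure2_subset {s C : Set (PS ι × PS κ)} (hC : IsZarClosed2 C) (h : s ⊆ C) :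
    zclosure2 s ⊆ C :=
  Set.sInter_subset_of_mem ⟨hC, h⟩

theorem IsZarClosed2.eq_zclosure2_union {s t u : Set (PS ι × PS κ)} (ht : IsZarClosed2 t)
    (h : t = s ∪ u) : t = zclosure2 s ∪ u := by
  refine (h.trans_subset (Set.union_subset_union_left u (subset_zclosure2 s))).antisymm ?_
  rw [Set.union_subset_iff, h]
  exact ⟨zclosure2_subset (h ▸ ht) Set.subset_union_left, Set.subset_union_right⟩

end Zariski

section LinearProjection

variable {m : ℕ}

def endMatrix (α : PN m) : Matrix (Fin (m + 1)) (Fin (m + 1)) ℂ :=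
  Matrix.of fun i j => α.rep (i, j)

theorem act_eq_mulVec (α : PN m) (v : Fin (m + 1) → ℂ) : act m α v = endMatrix α *ᵥ v := rfl

theorem maps_iff {α : PN m} {x y : Pm m} :
    maps m α x y ↔ act m α x.rep ≠ 0 ∧ act m α x.rep ∈ ℂ ∙ y.rep := by
  simp only [maps, eq_comm (a := y), Projectivization.mk_eq_iff_mem_span, exists_prop]

theorem graphFibre_eq_graphSet_union (X : Set (Pm m)) (α : PN m) :
    graphFibre m X α = graphSet m X α ∪ center m X α ×ˢ Set.univ := by
  ext ⟨x, y⟩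
  by_cases h : act m α x.rep = 0 <;>
    simp [graphFibre, graphSet, center, maps_iff, h]

theorem isZarClosed2_graphFibre {X : Set (Pm m)} (hX : IsClosed X) (α : PN m) :
    IsZarClosed2 (graphFibre m X α) :=
  hX.isZarClosed.preimage_fst.inter (isZarClosed2_setOf_mulVec_mem_span (endMatrix α))

theorem zclosure2_graphSet_subset_of_vecMul_eq_zero (X : Set (Pm m)) {α : PN m}
    {z : Fin (m + 1) → ℂ} (hz : z ᵥ* endMatrix α = 0) :
    zclosure2 (graphSet m X α) ⊆ {q | z ⬝ᵥ q.2.rep = 0} := by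
  refine zclosure2_subset (isZarClosed_setOf_dotProduct_rep_eq_zero z).preimage_snd ?_
  rintro ⟨x, y⟩ ⟨-, hxy⟩
  obtain ⟨h, rfl⟩ : ∃ h : act m α x.rep ≠ 0, y = Projectivization.mk ℂ _ h := hxy
  obtain ⟨a, ha⟩ := Projectivization.exists_smul_eq_mk_rep ℂ _ h
  change z ⬝ᵥ (Projectivization.mk ℂ _ h).rep = 0
  rw [← ha, Units.smul_def, dotProduct_smul, act_eq_mulVec, dotProduct_mulVec, hz,
    zero_dotProduct, smul_zero]

theorem exists_vecMul_endMatrix_eq_zero {X : Set (Pm m)} {α : PN m} {x : Pm m}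
    (hx : x ∈ center m X α) : ∃ z ≠ 0, z ᵥ* endMatrix α = 0 :=
  exists_vecMul_eq_zero_iff.mpr (exists_mulVec_eq_zero_iff.mp ⟨x.rep, x.rep_nonzero, hx.2⟩)

theorem center_eq_empty_of_graphFibre_eq {X : Set (Pm m)} {α : PN m}
    (h : graphFibre m X α = zclosure2 (graphSet m X α)) : center m X α = ∅ := by
  refine Set.eq_empty_of_forall_notMem fun x hx => ?_
  obtain ⟨z, hz0, hz⟩ := exists_vecMul_endMatrix_eq_zero hx
  obtain ⟨y, hy⟩ := exists_dotProduct_rep_ne_zero hz0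
  have hxy : (x, y) ∈ graphFibre m X α := by
    rw [graphFibre_eq_graphSet_union]
    exact Or.inr ⟨hx, trivial⟩
  exact hy (zclosure2_graphSet_subset_of_vecMul_eq_zero X hz (h ▸ hxy))

end LinearProjection

theorem graphFibre_eq_general (m : ℕ) (X : Set (Pm m)) (hXcl : IsClosed X) :
    ∀ α : PN m,
      graphFibre m X α =
        zclosure2 (graphSet m X α) ∪ ((center m X α) ×ˢ (Set.univ : Set (Pm m))) ∧
      (graphFibre m X α = zclosure2 (graphSet m X α) ↔ center m X α = ∅) := by
  intro α
  have hunion := (isZarClosed2_graphFibre hXcl α).eq_zclosure2_union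
    (graphFibre_eq_graphSet_union X α)
  refine ⟨hunion, ⟨center_eq_empty_of_graphFibre_eq, fun hC => ?_⟩⟩
  rw [hunion, hC, Set.empty_prod, Set.union_empty]

/-- Let `X ⊆ ℙ^m` be a nondegenerate closed subvariety of
dimension `n` and `Γ ⊆ ℙ^N × X × ℙ^m` the subscheme defined by `ℓ(v) ∧ w = 0`
(the closed graph of the universal linear map).  For `α ∈ ℙ^N` the fibre `Γ_α`
equals `Γ(α) ∪ (C_α × ℙ^m)`, where `Γ(α)` is the (Zariski) closed graph of
`α|_X` and `C_α` is the trace on `X` of the center of `α`; moreover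
`Γ_α = Γ(α)` if and only if `C_α = ∅`. -/
theorem graphFibre_eq (m n : ℕ) (X : Set (Pm m)) (hXne : X.Nonempty)
    (hXcl : IsClosed X) (hXirr : IsIrreducible X) (hXnd : Nondegenerate m X)
    (hdim : topologicalKrullDim ↥X = ((n : ℕ∞) : WithBot ℕ∞)) :
    ∀ α : PN m,
      graphFibre m X α =
        zclosure2 (graphSet m X α) ∪ ((center m X α) ×ˢ (Set.univ : Set (Pm m))) ∧
      (graphFibre m X α = zclosure2 (graphSet m X α) ↔ center m X α = ∅) :=
  graphFibre_eq_general m X hXcl
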